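/- No solution can return with opposite-signed slopes to a previously attained value: if w is a solution with parameters (w₀,γ), then there do not exist 0 ≤ x₁ < x₂ with w(x₁) = w(x₂), w′(x₁) ≤ 0 and w′(x₂) ≥ 0. Consequently, w has no local minimizer in (0,∞) and is not constant on any nondegenerate subinterval of [0,∞). -/

import Mathlib

/-!
Subtracting the equation at two points `x₁ < x₂` where `w` takes the same value cancels the
`π`-term and leaves `(σ²/2)(w′(x₂) − w′(x₁)) = h(x₁) − h(x₂) < 0`: along a level set of `w` the
slope strictly decreases. At a local minimizer `x` this is impossible: either `w` returns to
`w(x)` nearby, giving two points of slope zero, or, for a level slightly above `w(x)`, the last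
crossing to the left of `x` and the first crossing to the right form a level pair with slopes
`≤ 0` and `≥ 0`. A function constant on an interval has a local minimizer at its midpoint.
-/

open Set MeasureTheory Filter Topology

/-- `piU U c w = min_{μ ∈ U} (μ·w + c(μ))`, realized as an infimum. -/
noncomputable def piU (U : Set ℝ) (c : ℝ → ℝ) (w : ℝ) : ℝ :=
  sInf ((fun μ => μ * w + c μ) '' U)

/-- `w` is a continuously differentiable solution on `[0,∞)` of
`(σ²/2)·w′(x) + π(w(x)) + h(x) = γ` with `w(0) = w₀`, with derivative `w'`. -/
def IsSolution (σ : ℝ) (U : Set ℝ) (c h : ℝ → ℝ) (w₀ γ : ℝ) (w w' : ℝ → ℝ) : Prop :=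
  w 0 = w₀ ∧ ContinuousOn w' (Set.Ici 0) ∧
  (∀ x ∈ Set.Ici (0:ℝ), HasDerivWithinAt w (w' x) (Set.Ici 0) x) ∧
  (∀ x ∈ Set.Ici (0:ℝ), σ ^ 2 / 2 * w' x + piU U c (w x) + h x = γ)

theorem exists_last_eq_of_le {f : ℝ → ℝ} {a x v : ℝ} (hax : a ≤ x)
    (hf : ContinuousOn f (Icc a x)) (hv : v ∈ Icc (f x) (f a)) :
    ∃ y ∈ Icc a x, f y = v ∧ ∀ z ∈ Icc y x, f z ≤ v := by
  set S := Icc a x ∩ f ⁻¹' {v}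
  have hS : IsClosed S := hf.preimage_isClosed_of_isClosed isClosed_Icc isClosed_singleton
  have hSbdd : BddAbove S := bddAbove_Icc.mono inter_subset_left
  obtain ⟨y₀, hy₀, hfy₀⟩ := intermediate_value_Icc' hax hf hv
  have hy : sSup S ∈ S := hS.csSup_mem ⟨y₀, hy₀, hfy₀⟩ hSbdd
  refine ⟨sSup S, hy.1, hy.2, fun z hz => ?_⟩
  by_contra! hvz
  obtain ⟨z', hz', hfz'⟩ := intermediate_value_Icc' hz.2 (hf.mono (Icc_subset_Icc_left
    (hy.1.1.trans hz.1))) ⟨hv.1, hvz.le⟩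
  have hz'y : z' ≤ sSup S := le_csSup hSbdd ⟨⟨hy.1.1.trans (hz.1.trans hz'.1), hz'.2⟩, hfz'⟩
  have hzy : z = sSup S := le_antisymm (hz'.1.trans hz'y) hz.1
  exact hvz.ne' (hzy ▸ hy.2)

theorem exists_first_eq_of_le {f : ℝ → ℝ} {x b v : ℝ} (hxb : x ≤ b)
    (hf : ContinuousOn f (Icc x b)) (hv : v ∈ Icc (f x) (f b)) :
    ∃ y ∈ Icc x b, f y = v ∧ ∀ z ∈ Icc x y, f z ≤ v := by
  have hf' : ContinuousOn (fun t => f (-t)) (Icc (-b) (-x)) :=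
    hf.comp continuousOn_neg fun t ht => by simp only [mem_Icc] at ht ⊢; constructor <;> linarith
  obtain ⟨y, hy, hfy, hle⟩ := exists_last_eq_of_le (neg_le_neg hxb) hf' (by simpa using hv)
  refine ⟨-y, ⟨by linarith [hy.2], by linarith [hy.1]⟩, hfy, fun z hz => ?_⟩
  simpa using hle (-z) ⟨by linarith [hz.2], by linarith [hz.1]⟩

theorem IsLocalMaxOn.hasDerivWithinAt_mul_sub_nonpos {f : ℝ → ℝ} {f' a b : ℝ} {s : Set ℝ}
    (hmax : IsLocalMaxOn f s a) (hf : HasDerivWithinAt f f' s a) (hs : segment ℝ a b ⊆ s) :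
    f' * (b - a) ≤ 0 := by
  simpa [mul_comm] using hmax.hasFDerivWithinAt_nonpos hf.hasFDerivWithinAt
    (sub_mem_posTangentConeAt_of_segment_subset hs)

theorem exists_isMaxOn_Icc_of_lt_of_lt {f : ℝ → ℝ} {a x b : ℝ} (hax : a ≤ x) (hxb : x ≤ b)
    (hf : ContinuousOn f (Icc a b)) (ha : f x < f a) (hb : f x < f b) :
    ∃ y₁ y₂, a ≤ y₁ ∧ y₁ < y₂ ∧ y₂ ≤ b ∧ f y₁ = f y₂ ∧ IsMaxOn f (Icc y₁ y₂) y₁ := by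
  set v := min (f a) (f b)
  obtain ⟨y₁, hy₁, hfy₁, hle₁⟩ := exists_last_eq_of_le hax (hf.mono (Icc_subset_Icc_right hxb))
    ⟨lt_min ha hb |>.le, min_le_left _ _⟩
  obtain ⟨y₂, hy₂, hfy₂, hle₂⟩ := exists_first_eq_of_le hxb (hf.mono (Icc_subset_Icc_left hax))
    ⟨lt_min ha hb |>.le, min_le_right _ _⟩
  have hy₁x : y₁ < x := hy₁.2.lt_of_ne fun h => (lt_min ha hb).ne (by rwa [h] at hfy₁)
  have hxy₂ : x < y₂ := hy₂.1.lt_of_ne fun h => (lt_min ha hb).ne (by rwa [← h] at hfy₂)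
  refine ⟨y₁, y₂, hy₁.1, hy₁x.trans hxy₂, hy₂.2, hfy₁.trans hfy₂.symm, fun z hz => ?_⟩
  rw [mem_ofPred_eq, hfy₁]
  rcases le_total z x with hzx | hxz
  · exact hle₁ z ⟨hz.1, hzx⟩
  · exact hle₂ z ⟨hxz, hz.2⟩

theorem not_isLocalMinOn_Ioi {w w' : ℝ → ℝ} {a x : ℝ}
    (hw : ∀ y, a < y → HasDerivAt w (w' y) y)
    (hpair : ¬ ∃ y₁ y₂, a < y₁ ∧ y₁ < y₂ ∧ w y₁ = w y₂ ∧ w' y₁ ≤ 0 ∧ 0 ≤ w' y₂) (hx : a < x) :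
    ¬ IsLocalMinOn w (Ioi a) x := by
  intro hmin
  have hloc : IsLocalMin w x := hmin.isLocalMin (Ioi_mem_nhds hx)
  obtain ⟨ε, hε, hball⟩ := Metric.nhds_basis_closedBall.eventually_iff.1
    (hloc.and (Ioi_mem_nhds hx))
  simp only [Real.closedBall_eq_Icc] at hball
  have hne : ∀ z ∈ Ioo (x - ε) (x + ε), z ≠ x → w x < w z := by
    intro z hz hzx
    refine (hball ⟨hz.1.le, hz.2.le⟩).1.lt_of_ne fun hwz => ?_
    have hz_min : IsLocalMin w z := by
      filter_upwards [Ioo_mem_nhds hz.1 hz.2] with y hy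
      exact hwz ▸ (hball ⟨hy.1.le, hy.2.le⟩).1
    have hz' := hz_min.hasDerivAt_eq_zero (hw z (hball ⟨hz.1.le, hz.2.le⟩).2)
    have hx' := hloc.hasDerivAt_eq_zero (hw x hx)
    rcases hzx.lt_or_gt with h | h
    · exact hpair ⟨z, x, (hball ⟨hz.1.le, hz.2.le⟩).2, h, hwz.symm, hz'.le, hx'.ge⟩
    · exact hpair ⟨x, z, hx, h, hwz, hx'.le, hz'.ge⟩
  obtain ⟨y₁, y₂, hy₁, hy₁₂, hy₂, hwy, hmax⟩ := exists_isMaxOn_Icc_of_lt_of_lt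
    (a := x - ε / 2) (b := x + ε / 2) (by linarith) (by linarith)
    (fun y hy => (hw y (hball ⟨by linarith [hy.1], by linarith [hy.2]⟩).2).continuousAt
      |>.continuousWithinAt)
    (hne _ ⟨by linarith, by linarith⟩ (by linarith))
    (hne _ ⟨by linarith, by linarith⟩ (by linarith))
  have ha₁ : a < y₁ := (hball ⟨by linarith, by linarith⟩).2
  have ha₂ : a < y₂ := (hball ⟨by linarith, by linarith⟩).2
  have hd₁ : w' y₁ * (y₂ - y₁) ≤ 0 := hmax.localize.hasDerivWithinAt_mul_sub_nonpos
    (hw y₁ ha₁).hasDerivWithinAt (segment_eq_Icc hy₁₂.le).subset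
  have hmax₂ : IsMaxOn w (Icc y₁ y₂) y₂ := fun z hz => (hmax hz).trans hwy.le
  have hd₂ : w' y₂ * (y₁ - y₂) ≤ 0 := hmax₂.localize.hasDerivWithinAt_mul_sub_nonpos
    (hw y₂ ha₂).hasDerivWithinAt (by rw [segment_symm, segment_eq_Icc hy₁₂.le])
  exact hpair ⟨y₁, y₂, ha₁, hy₁₂, hwy, nonpos_of_mul_nonpos_left hd₁ (sub_pos.2 hy₁₂),
    nonneg_of_mul_nonpos_left hd₂ (sub_neg.2 hy₁₂)⟩

theorem IsSolution.hasDerivAt {σ : ℝ} {U : Set ℝ} {c h : ℝ → ℝ} {w₀ γ : ℝ} {w w' : ℝ → ℝ}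
    (hw : IsSolution σ U c h w₀ γ w w') {x : ℝ} (hx : 0 < x) : HasDerivAt w (w' x) x :=
  (hw.2.2.1 x hx.le).hasDerivAt (Ici_mem_nhds hx)

theorem IsSolution.deriv_lt_of_eq {σ : ℝ} {U : Set ℝ} {c h : ℝ → ℝ} {w₀ γ : ℝ} {w w' : ℝ → ℝ}
    (hw : IsSolution σ U c h w₀ γ w w') (hσ : σ ≠ 0) (hh : StrictMonoOn h (Ici 0)) {x₁ x₂ : ℝ}
    (hx₁ : 0 ≤ x₁) (hx₁₂ : x₁ < x₂) (heq : w x₁ = w x₂) : w' x₂ < w' x₁ := by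
  have e₁ := hw.2.2.2 x₁ hx₁
  have e₂ := hw.2.2.2 x₂ (hx₁.trans hx₁₂.le)
  have hhx := hh hx₁ (hx₁.trans hx₁₂.le) hx₁₂
  rw [heq] at e₁
  have hdiff : σ ^ 2 / 2 * (w' x₂ - w' x₁) < 0 := by linarith
  exact sub_neg.1 (neg_of_mul_neg_right hdiff (by positivity))

theorem stmt_9_general (σ : ℝ) (hσ : 0 < σ) (U : Set ℝ)
    (c : ℝ → ℝ) (h : ℝ → ℝ)
    (hhmono : StrictMonoOn h (Set.Ici 0))
    (w₀ γ : ℝ) (w w' : ℝ → ℝ) (hw : IsSolution σ U c h w₀ γ w w') :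
    (¬ ∃ x₁ x₂ : ℝ, 0 ≤ x₁ ∧ x₁ < x₂ ∧ w x₁ = w x₂ ∧ w' x₁ ≤ 0 ∧ 0 ≤ w' x₂) ∧
    (¬ ∃ x : ℝ, 0 < x ∧ IsLocalMinOn w (Set.Ioi 0) x) ∧
    (¬ ∃ x₁ x₂ : ℝ, 0 ≤ x₁ ∧ x₁ < x₂ ∧ ∀ y ∈ Set.Icc x₁ x₂, w y = w x₁) := by
  have hpair : ¬ ∃ x₁ x₂ : ℝ, 0 ≤ x₁ ∧ x₁ < x₂ ∧ w x₁ = w x₂ ∧ w' x₁ ≤ 0 ∧ 0 ≤ w' x₂ :=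
    fun ⟨_, _, h₁, h₁₂, heq, hd₁, hd₂⟩ =>
      (hw.deriv_lt_of_eq hσ.ne' hhmono h₁ h₁₂ heq).not_ge (hd₁.trans hd₂)
  have hnomin : ¬ ∃ x : ℝ, 0 < x ∧ IsLocalMinOn w (Set.Ioi 0) x := fun ⟨_, hx, hmin⟩ =>
    not_isLocalMinOn_Ioi (fun _ hy => hw.hasDerivAt hy)
      (fun ⟨y₁, y₂, h₁, h⟩ => hpair ⟨y₁, y₂, h₁.le, h⟩) hx hmin
  refine ⟨hpair, hnomin, fun ⟨x₁, x₂, h₁, h₁₂, hconst⟩ =>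
    hnomin ⟨(x₁ + x₂) / 2, by linarith, ?_⟩⟩
  filter_upwards [nhdsWithin_le_nhds (Icc_mem_nhds (by linarith : x₁ < (x₁ + x₂) / 2)
    (by linarith : (x₁ + x₂) / 2 < x₂))] with y hy
  rw [hconst y hy, hconst _ ⟨by linarith, by linarith⟩]

theorem stmt_9 (σ : ℝ) (hσ : 0 < σ) (U : Set ℝ) (hUne : U.Nonempty) (hUcpt : IsCompact U)
    (c : ℝ → ℝ) (hc : Continuous c) (h : ℝ → ℝ)
    (hhcont : ContinuousOn h (Set.Ici 0)) (hhmono : StrictMonoOn h (Set.Ici 0))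
    (hh0 : h 0 = 0) (hhtop : Filter.Tendsto h Filter.atTop Filter.atTop)
    (w₀ γ : ℝ) (w w' : ℝ → ℝ) (hw : IsSolution σ U c h w₀ γ w w') :
    (¬ ∃ x₁ x₂ : ℝ, 0 ≤ x₁ ∧ x₁ < x₂ ∧ w x₁ = w x₂ ∧ w' x₁ ≤ 0 ∧ 0 ≤ w' x₂) ∧
    (¬ ∃ x : ℝ, 0 < x ∧ IsLocalMinOn w (Set.Ioi 0) x) ∧
    (¬ ∃ x₁ x₂ : ℝ, 0 ≤ x₁ ∧ x₁ < x₂ ∧ ∀ y ∈ Set.Icc x₁ x₂, w y = w x₁) :=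
  stmt_9_general σ hσ U c h hhmono w₀ γ w w' hw
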